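/- Let 1 ≤ s ≤ N, 1 ≤ k ≤ m, λ > 0, and suppose A ∈ ℂ^{m×N} satisfies the ℓ²-robust null space property of order (s,k) with weight λ and constants ρ ∈ (0,1), τ > 0. Then there exist constants C₃, C₄ > 0 depending only on ρ and τ such that the following holds. If x ∈ ℂ^N, c ∈ ℂ^m, y ∈ ℂ^m and ε > 0 satisfy ‖Ax + c − y‖₂ ≤ ε, and (x̂, ĉ) is a minimizer of ‖z‖₁ + λ‖d‖₁ over pairs (z,d) ∈ ℂ^N × ℂ^m subject to ‖Az + d − y‖₂ ≤ ε, then ‖x − x̂‖₂ + ‖c − ĉ‖₂ ≤ C₃(1 + η^{1/4})·(σ_s(x)₁/√s + σ_k(c)₁/√k) + C₄(1 + η^{1/4})·ε, where η = (s + λ²k)/min{s, λ²k}. -/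

import Mathlib

open Finset Matrix MeasureTheory

noncomputable def l1norm {n : ℕ} (x : Fin n → ℂ) : ℝ := ∑ i, ‖x i‖

noncomputable def l2norm {n : ℕ} (x : Fin n → ℂ) : ℝ := Real.sqrt (∑ i, ‖x i‖ ^ 2)

/-- The vector equal to `x` on `S` and zero elsewhere. -/
def restr {n : ℕ} (x : Fin n → ℂ) (S : Finset (Fin n)) : Fin n → ℂ :=
  fun i => if i ∈ S then x i else 0

/-- `x` has at most `s` nonzero entries. -/
def IsSparse {n : ℕ} (s : ℕ) (x : Fin n → ℂ) : Prop :=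
  ∃ S : Finset (Fin n), S.card ≤ s ∧ ∀ i ∉ S, x i = 0

/-- Best `s`-term approximation error of `x` in the `ℓ¹` norm. -/
noncomputable def sigma1 {n : ℕ} (s : ℕ) (x : Fin n → ℂ) : ℝ :=
  sInf {t : ℝ | ∃ z : Fin n → ℂ, IsSparse s z ∧ t = l1norm (x - z)}

/-- `η_{s,k}(λ) = (s + λ²k)/min{s, λ²k}`. -/
noncomputable def etaSK (s k : ℕ) (lam : ℝ) : ℝ :=
  ((s : ℝ) + lam ^ 2 * k) / min (s : ℝ) (lam ^ 2 * k)

/-- The ℓ¹-robust null space property of order (s,k) with weight lam, constants ρ, τ. -/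
def L1RNSP {m N : ℕ} (A : Matrix (Fin m) (Fin N) ℂ) (s k : ℕ) (lam ρ τ : ℝ) : Prop :=
  ∀ (x : Fin N → ℂ) (c : Fin m → ℂ) (S : Finset (Fin N)) (T : Finset (Fin m)),
    S.card ≤ s → T.card ≤ k →
      l1norm (restr x S) + lam * l1norm (restr c T) ≤
        ρ * (l1norm (restr x Sᶜ) + lam * l1norm (restr c Tᶜ)) + τ * l2norm (A.mulVec x + c)

/-- The ℓ²-robust null space property of order (s,k) with weight lam, constants ρ, τ. -/
def L2RNSP {m N : ℕ} (A : Matrix (Fin m) (Fin N) ℂ) (s k : ℕ) (lam ρ τ : ℝ) : Prop :=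
  ∀ (x : Fin N → ℂ) (c : Fin m → ℂ) (S : Finset (Fin N)) (T : Finset (Fin m)),
    S.card ≤ s → T.card ≤ k →
      Real.sqrt (l2norm (restr x S) ^ 2 + l2norm (restr c T) ^ 2) ≤
        (ρ / Real.sqrt ((s : ℝ) + lam ^ 2 * k)) *
            (l1norm (restr x Sᶜ) + lam * l1norm (restr c Tᶜ)) +
          τ * l2norm (A.mulVec x + c)

/-- `A` satisfies the two-sided RIP inequality for the sparse corruptions problem of
order `(s,k)` with constant `δ`. -/
def RIPCor {m N : ℕ} (A : Matrix (Fin m) (Fin N) ℂ) (s k : ℕ) (δ : ℝ) : Prop :=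
  ∀ (x : Fin N → ℂ) (c : Fin m → ℂ), IsSparse s x → IsSparse k c →
    (1 - δ) * (l2norm x ^ 2 + l2norm c ^ 2) ≤ l2norm (A.mulVec x + c) ^ 2 ∧
      l2norm (A.mulVec x + c) ^ 2 ≤ (1 + δ) * (l2norm x ^ 2 + l2norm c ^ 2)

/-- `A` satisfies the RIP inequality for sparse vectors of order `s` with constant `δ`. -/
def RIPSparse {m N : ℕ} (A : Matrix (Fin m) (Fin N) ℂ) (s : ℕ) (δ : ℝ) : Prop :=
  ∀ x : Fin N → ℂ, IsSparse s x →
    (1 - δ) * l2norm x ^ 2 ≤ l2norm (A.mulVec x) ^ 2 ∧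
      l2norm (A.mulVec x) ^ 2 ≤ (1 + δ) * l2norm x ^ 2

/-- `(xh, ch)` is a minimizer of `‖z‖₁ + lam ‖d‖₁` subject to `‖Az + d - y‖₂ ≤ ε`. -/
def IsMinimizer {m N : ℕ} (A : Matrix (Fin m) (Fin N) ℂ) (y : Fin m → ℂ) (lam ε : ℝ)
    (xh : Fin N → ℂ) (ch : Fin m → ℂ) : Prop :=
  l2norm (A.mulVec xh + ch - y) ≤ ε ∧
    ∀ (z : Fin N → ℂ) (d : Fin m → ℂ), l2norm (A.mulVec z + d - y) ≤ ε →
      l1norm xh + lam * l1norm ch ≤ l1norm z + lam * l1norm d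

/-- Spectral norm of a matrix (operator norm w.r.t. Euclidean norms). -/
noncomputable def specNorm {a b : ℕ} (B : Matrix (Fin a) (Fin b) ℂ) : ℝ :=
  ‖LinearMap.toContinuousLinearMap (Matrix.toEuclideanLin B)‖

/-- `σ_{s,k}(A)`: the maximum spectral norm over `k × s` submatrices of `A`. -/
noncomputable def sigmaSK {m N : ℕ} (A : Matrix (Fin m) (Fin N) ℂ) (s k : ℕ) : ℝ :=
  sSup {t : ℝ | ∃ (S : Finset (Fin N)) (T : Finset (Fin m)) (hS : S.card = s) (hT : T.card = k),
    t = specNorm (A.submatrix (fun i : Fin k => ((T.orderIsoOfFin hT i : Fin m)))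
      (fun j : Fin s => ((S.orderIsoOfFin hS j : Fin N))))}

/-! With `u = x - xh`, `w = c - ch` and `P = ‖u‖₁ + λ‖w‖₁`: by Cauchy–Schwarz on the head, the
ℓ²-robust null space property implies the ℓ¹-robust one with `τ √(s + λ²k)` in place of `τ`, and
minimality of `(xh, ch)` puts `(u, w)` in the weighted ℓ¹ cone over the supports of best `s`- and
`k`-term approximations of `x` and `c`; hence `P / √(s + λ²k) ≲ σ_s(x)₁/√s + σ_k(c)₁/√k + τε`.
For the ℓ² error, restrict `u` and `w` to their `s` and `k` largest entries: the ℓ²-RNSP bounds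
the head `K` by `P / √(s + λ²k) + 2τε`, and the tail satisfies `‖u_{Sᶜ}‖₂² √s ≤ K ‖u‖₁`.
Since `√(s + λ²k) ≤ √η · √s`, this gives `‖u_{Sᶜ}‖₂² ≤ √η · K · P / √(s + λ²k)`, and AM–GM
costs only the factor `η^{1/4}` (likewise for `w`, with `λ√k` in place of `√s`). -/

section Norms

variable {n : ℕ}

lemma l1norm_nonneg (x : Fin n → ℂ) : 0 ≤ l1norm x :=
  Finset.sum_nonneg fun _ _ => norm_nonneg _

lemma l1norm_restr (x : Fin n → ℂ) (S : Finset (Fin n)) :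
    l1norm (restr x S) = ∑ i ∈ S, ‖x i‖ := by
  simp only [l1norm, restr, apply_ite norm, norm_zero, Finset.sum_ite_mem, Finset.univ_inter]

lemma l1norm_restr_add_l1norm_restr_compl (x : Fin n → ℂ) (S : Finset (Fin n)) :
    l1norm (restr x S) + l1norm (restr x Sᶜ) = l1norm x := by
  rw [l1norm_restr, l1norm_restr, l1norm, Finset.sum_add_sum_compl]

lemma l1norm_restr_le (x : Fin n → ℂ) (S : Finset (Fin n)) :
    l1norm (restr x S) ≤ l1norm x := by
  linarith [l1norm_restr_add_l1norm_restr_compl x S, l1norm_nonneg (restr x Sᶜ)]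

lemma l2norm_eq_norm_toLp (x : Fin n → ℂ) : l2norm x = ‖WithLp.toLp 2 x‖ := by
  rw [EuclideanSpace.norm_eq]; rfl

lemma l2norm_nonneg (x : Fin n → ℂ) : 0 ≤ l2norm x := Real.sqrt_nonneg _

lemma l2norm_sub_le (x y : Fin n → ℂ) : l2norm (x - y) ≤ l2norm x + l2norm y := by
  simpa only [l2norm_eq_norm_toLp, WithLp.toLp_sub] using norm_sub_le _ _

lemma l2norm_restr_sq (x : Fin n → ℂ) (S : Finset (Fin n)) :
    l2norm (restr x S) ^ 2 = ∑ i ∈ S, ‖x i‖ ^ 2 := by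
  rw [l2norm, Real.sq_sqrt (Finset.sum_nonneg fun _ _ => sq_nonneg _)]
  simp only [restr, apply_ite norm, norm_zero, apply_ite (· ^ 2), zero_pow two_ne_zero,
    Finset.sum_ite_mem, Finset.univ_inter]

lemma l2norm_le_l2norm_restr_add_l2norm_restr_compl (x : Fin n → ℂ) (S : Finset (Fin n)) :
    l2norm x ≤ l2norm (restr x S) + l2norm (restr x Sᶜ) := by
  have hsplit : restr x S + restr x Sᶜ = x := by
    funext i; by_cases h : i ∈ S <;> simp [restr, h]
  conv_lhs => rw [← hsplit]
  simpa only [l2norm_eq_norm_toLp, WithLp.toLp_add] using norm_add_le _ _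

lemma l1norm_restr_le_sqrt_card_mul_l2norm_restr (x : Fin n → ℂ) (S : Finset (Fin n)) :
    l1norm (restr x S) ≤ Real.sqrt S.card * l2norm (restr x S) := by
  rw [← Real.sqrt_sq (l1norm_nonneg _), ← Real.sqrt_sq (l2norm_nonneg (restr x S)),
    ← Real.sqrt_mul (Nat.cast_nonneg _), l1norm_restr, l2norm_restr_sq]
  exact Real.sqrt_le_sqrt sq_sum_le_card_mul_sum_sq

end Norms

section LargestEntries

variable {n : ℕ}

lemma exists_largest_norms (v : Fin n → ℂ) {s : ℕ} (hs : s ≤ n) :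
    ∃ S : Finset (Fin n), S.card = s ∧ (∀ i ∉ S, ∀ j ∈ S, ‖v i‖ ≤ ‖v j‖) ∧
      ∀ Z : Finset (Fin n), Z.card ≤ s → ∑ i ∈ Z, ‖v i‖ ≤ ∑ i ∈ S, ‖v i‖ := by
  have hne : (univ.powersetCard s : Finset (Finset (Fin n))).Nonempty :=
    Finset.powersetCard_nonempty.mpr (by simpa using hs)
  obtain ⟨S, hS, hSmax⟩ := Finset.exists_max_image _ (fun S => ∑ i ∈ S, ‖v i‖) hne
  rw [Finset.mem_powersetCard_univ] at hS
  have hmax : ∀ Z : Finset (Fin n), Z.card ≤ s → ∑ i ∈ Z, ‖v i‖ ≤ ∑ i ∈ S, ‖v i‖ := by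
    intro Z hZ
    obtain ⟨Z', hZZ', hZ'⟩ := Finset.exists_superset_card_eq hZ (by simpa using hs)
    exact (Finset.sum_le_sum_of_subset_of_nonneg hZZ' fun _ _ _ => norm_nonneg _).trans
      (hSmax Z' (Finset.mem_powersetCard_univ.mpr hZ'))
  refine ⟨S, hS, fun i hi j hj => ?_, hmax⟩
  -- exchanging `j` for `i` cannot increase the sum
  have hi' : i ∉ S.erase j := fun h => hi (Finset.mem_of_mem_erase h)
  have hswap := hmax (insert i (S.erase j)) (by
    rw [Finset.card_insert_of_notMem hi', Finset.card_erase_of_mem hj]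
    have := Finset.card_pos.mpr ⟨j, hj⟩
    omega)
  rw [Finset.sum_insert hi', ← Finset.sum_erase_add _ _ hj] at hswap
  linarith

lemma l1norm_restr_compl_le_sigma1 {s : ℕ} (x : Fin n → ℂ) (S : Finset (Fin n))
    (hS : ∀ Z : Finset (Fin n), Z.card ≤ s → ∑ i ∈ Z, ‖x i‖ ≤ ∑ i ∈ S, ‖x i‖) :
    l1norm (restr x Sᶜ) ≤ sigma1 s x := by
  refine le_csInf ⟨l1norm x, 0, ⟨∅, by simp, fun _ _ => rfl⟩, by simp⟩ ?_
  rintro _ ⟨z, ⟨Z, hZcard, hZ⟩, rfl⟩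
  have hxZ : ∑ i ∈ Zᶜ, ‖x i‖ = l1norm (restr (x - z) Zᶜ) := by
    rw [l1norm_restr]
    exact Finset.sum_congr rfl fun i hi => by simp [hZ i (Finset.mem_compl.mp hi)]
  have hsplitS := l1norm_restr_add_l1norm_restr_compl x S
  rw [l1norm_restr x S] at hsplitS
  have hsplitZ : ∑ i ∈ Z, ‖x i‖ + ∑ i ∈ Zᶜ, ‖x i‖ = l1norm x := Finset.sum_add_sum_compl Z _
  linarith [hS Z hZcard, l1norm_restr_le (x - z) Zᶜ]

lemma l2norm_restr_compl_sq_mul_sqrt_card_le (v : Fin n → ℂ) (S : Finset (Fin n))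
    (hord : ∀ i ∉ S, ∀ j ∈ S, ‖v i‖ ≤ ‖v j‖) :
    l2norm (restr v Sᶜ) ^ 2 * Real.sqrt S.card ≤ l2norm (restr v S) * l1norm v := by
  rcases S.eq_empty_or_nonempty with rfl | hSne
  · simp [mul_nonneg (l2norm_nonneg _) (l1norm_nonneg v)]
  obtain ⟨j₀, hj₀, hj₀min⟩ := S.exists_min_image (fun j => ‖v j‖) hSne
  have hhead : Real.sqrt S.card * ‖v j₀‖ ≤ l2norm (restr v S) := by
    rw [← Real.sqrt_sq (norm_nonneg (v j₀)), ← Real.sqrt_mul (Nat.cast_nonneg _),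
      ← Real.sqrt_sq (l2norm_nonneg (restr v S)), l2norm_restr_sq, ← nsmul_eq_mul,
      ← Finset.sum_const]
    exact Real.sqrt_le_sqrt (Finset.sum_le_sum fun i hi =>
      pow_le_pow_left₀ (norm_nonneg _) (hj₀min i hi) 2)
  have htail : l2norm (restr v Sᶜ) ^ 2 ≤ ‖v j₀‖ * l1norm v := by
    calc l2norm (restr v Sᶜ) ^ 2 = ∑ i ∈ Sᶜ, ‖v i‖ ^ 2 := l2norm_restr_sq v Sᶜ
      _ ≤ ∑ i ∈ Sᶜ, ‖v j₀‖ * ‖v i‖ := Finset.sum_le_sum fun i hi => by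
          rw [sq]
          exact mul_le_mul_of_nonneg_right (hord i (Finset.mem_compl.mp hi) j₀ hj₀)
            (norm_nonneg _)
      _ = ‖v j₀‖ * l1norm (restr v Sᶜ) := by rw [l1norm_restr, Finset.mul_sum]
      _ ≤ ‖v j₀‖ * l1norm v := by gcongr; exact l1norm_restr_le v Sᶜ
  calc l2norm (restr v Sᶜ) ^ 2 * Real.sqrt S.card ≤ ‖v j₀‖ * l1norm v * Real.sqrt S.card := by
        gcongr
    _ = Real.sqrt S.card * ‖v j₀‖ * l1norm v := by ring
    _ ≤ l2norm (restr v S) * l1norm v := by gcongr; exact l1norm_nonneg v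

lemma l1norm_restr_compl_sub_le (x z : Fin n → ℂ) (S : Finset (Fin n)) :
    l1norm (restr (x - z) Sᶜ) ≤
      l1norm z - l1norm x + l1norm (restr (x - z) S) + 2 * l1norm (restr x Sᶜ) := by
  have hhead : ∑ i ∈ S, ‖x i‖ ≤ ∑ i ∈ S, ‖z i‖ + ∑ i ∈ S, ‖(x - z) i‖ := by
    rw [← Finset.sum_add_distrib]
    exact Finset.sum_le_sum fun i _ => by simpa using norm_le_norm_add_norm_sub' (x i) (z i)
  have htail : ∑ i ∈ Sᶜ, ‖(x - z) i‖ ≤ ∑ i ∈ Sᶜ, ‖x i‖ + ∑ i ∈ Sᶜ, ‖z i‖ := by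
    rw [← Finset.sum_add_distrib]
    exact Finset.sum_le_sum fun i _ => norm_sub_le (x i) (z i)
  have hx := l1norm_restr_add_l1norm_restr_compl x S
  have hz := l1norm_restr_add_l1norm_restr_compl z S
  simp only [l1norm_restr] at *
  linarith

end LargestEntries

section Eta

variable {s k : ℕ} {lam : ℝ}

lemma one_le_etaSK (hμ : 0 < min (s : ℝ) (lam ^ 2 * k)) : 1 ≤ etaSK s k lam := by
  rw [etaSK, one_le_div hμ]
  have := min_le_add_of_nonneg_right (a := (s : ℝ)) (b := lam ^ 2 * k) (by positivity)
  linarith [min_le_left (s : ℝ) (lam ^ 2 * k)]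

lemma sqrt_add_le_sqrt_etaSK_mul_sqrt (hμ : 0 < min (s : ℝ) (lam ^ 2 * k)) {p : ℝ}
    (hp : min (s : ℝ) (lam ^ 2 * k) ≤ p) :
    Real.sqrt (s + lam ^ 2 * k) ≤ Real.sqrt (etaSK s k lam) * Real.sqrt p := by
  rw [← Real.sqrt_mul (zero_le_one.trans (one_le_etaSK hμ))]
  refine Real.sqrt_le_sqrt ?_
  rw [etaSK, div_mul_eq_mul_div, le_div_iff₀ hμ]
  exact mul_le_mul_of_nonneg_left hp (by positivity)

lemma rpow_one_fourth_sq {η : ℝ} (hη : 0 ≤ η) : (η ^ ((1 : ℝ) / 4)) ^ 2 = Real.sqrt η := by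
  rw [← Real.rpow_natCast, ← Real.rpow_mul hη, Real.sqrt_eq_rpow]
  norm_num

lemma add_mul_le_sqrt_add_mul (hs : 0 < s) (hk : 0 < k) (hlam : 0 ≤ lam)
    {a b : ℝ} (ha : 0 ≤ a) (hb : 0 ≤ b) :
    a + lam * b ≤ Real.sqrt (s + lam ^ 2 * k) * (a / Real.sqrt s + b / Real.sqrt k) := by
  have hsR : 0 < Real.sqrt s := Real.sqrt_pos.mpr (by exact_mod_cast hs)
  have hkR : 0 < Real.sqrt k := Real.sqrt_pos.mpr (by exact_mod_cast hk)
  have hsQ : Real.sqrt s ≤ Real.sqrt (s + lam ^ 2 * k) := Real.sqrt_le_sqrt (by simp; positivity)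
  have hkQ : lam * Real.sqrt k ≤ Real.sqrt (s + lam ^ 2 * k) := by
    have := Real.sqrt_le_sqrt (le_add_of_nonneg_left (Nat.cast_nonneg s) :
      lam ^ 2 * k ≤ s + lam ^ 2 * k)
    rwa [Real.sqrt_mul (sq_nonneg lam), Real.sqrt_sq hlam] at this
  calc a + lam * b = Real.sqrt s * (a / Real.sqrt s) + lam * Real.sqrt k * (b / Real.sqrt k) := by
        field_simp
    _ ≤ Real.sqrt (s + lam ^ 2 * k) * (a / Real.sqrt s) +
        Real.sqrt (s + lam ^ 2 * k) * (b / Real.sqrt k) := by gcongr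
    _ = _ := by ring

end Eta

lemma le_mul_add_div_of_sq_mul_le {X K P a Q t : ℝ} (hK : 0 ≤ K) (hP : 0 ≤ P) (ha : 0 < a)
    (hQ : 0 < Q) (ht : 0 ≤ t) (hQa : Q ≤ t ^ 2 * a) (hX : X ^ 2 * a ≤ K * P) :
    X ≤ t * ((K + P / Q) / 2) := by
  refine le_of_sq_le_sq ?_ (by positivity)
  calc X ^ 2 ≤ K * P / a := (le_div_iff₀ ha).mpr hX
    _ ≤ K * P * t ^ 2 / Q := by
        rw [div_le_div_iff₀ ha hQ]
        exact mul_le_mul_of_nonneg_left hQa (mul_nonneg hK hP) |>.trans_eq (by ring)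
    _ = t ^ 2 * (K * (P / Q)) := by ring
    _ ≤ t ^ 2 * ((K + P / Q) / 2) ^ 2 := by gcongr; nlinarith [sq_nonneg (K - P / Q)]
    _ = (t * ((K + P / Q) / 2)) ^ 2 := by ring

lemma l2norm_le_of_largest_norms {n : ℕ} (v : Fin n → ℂ) {S : Finset (Fin n)} (hS : S.Nonempty)
    (hord : ∀ i ∉ S, ∀ j ∈ S, ‖v i‖ ≤ ‖v j‖) {K P a Q t : ℝ}
    (hK : l2norm (restr v S) ≤ K) (ha : 0 < a) (hP : a * l1norm v ≤ P) (hQ : 0 < Q)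
    (ht : 0 ≤ t) (hQt : Q ≤ t ^ 2 * (a * Real.sqrt S.card)) :
    l2norm v ≤ K + t * ((K + P / Q) / 2) := by
  have hcard : 0 < Real.sqrt S.card := Real.sqrt_pos.mpr (by exact_mod_cast hS.card_pos)
  have htail : l2norm (restr v Sᶜ) ^ 2 * (a * Real.sqrt S.card) ≤ K * P := by
    have := l2norm_restr_compl_sq_mul_sqrt_card_le v S hord
    calc l2norm (restr v Sᶜ) ^ 2 * (a * Real.sqrt S.card)
        = a * (l2norm (restr v Sᶜ) ^ 2 * Real.sqrt S.card) := by ring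
      _ ≤ a * (K * l1norm v) := mul_le_mul_of_nonneg_left
          (this.trans (mul_le_mul_of_nonneg_right hK (l1norm_nonneg v))) ha.le
      _ = K * (a * l1norm v) := by ring
      _ ≤ K * P := by gcongr; exact (l2norm_nonneg _).trans hK
  linarith [l2norm_le_l2norm_restr_add_l2norm_restr_compl v S,
    le_mul_add_div_of_sq_mul_le ((l2norm_nonneg _).trans hK)
      ((mul_nonneg ha.le (l1norm_nonneg v)).trans hP) (mul_pos ha hcard) hQ ht hQt htail]

section NullSpaceProperty

variable {m N s k : ℕ} {A : Matrix (Fin m) (Fin N) ℂ} {lam ρ τ ε : ℝ} {y : Fin m → ℂ}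
  {x xh : Fin N → ℂ} {c ch : Fin m → ℂ}

lemma L2RNSP.l1RNSP (hA : L2RNSP A s k lam ρ τ) (hlam : 0 ≤ lam) (hρ : 0 ≤ ρ) :
    L1RNSP A s k lam ρ (τ * Real.sqrt (s + lam ^ 2 * k)) := by
  intro x c S T hS hT
  set Q := Real.sqrt (s + lam ^ 2 * k)
  set tail := l1norm (restr x Sᶜ) + lam * l1norm (restr c Tᶜ)
  have hx : l1norm (restr x S) ≤ Real.sqrt s * l2norm (restr x S) :=
    (l1norm_restr_le_sqrt_card_mul_l2norm_restr x S).trans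
      (by gcongr; exact l2norm_nonneg _)
  have hc : lam * l1norm (restr c T) ≤ Real.sqrt (lam ^ 2 * k) * l2norm (restr c T) := by
    rw [Real.sqrt_mul (sq_nonneg lam), Real.sqrt_sq hlam, mul_assoc]
    exact mul_le_mul_of_nonneg_left ((l1norm_restr_le_sqrt_card_mul_l2norm_restr c T).trans
      (by gcongr; exact l2norm_nonneg _)) hlam
  have hCS : Real.sqrt s * l2norm (restr x S) + Real.sqrt (lam ^ 2 * k) * l2norm (restr c T) ≤
      Q * Real.sqrt (l2norm (restr x S) ^ 2 + l2norm (restr c T) ^ 2) := by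
    have h := Real.sum_sqrt_mul_sqrt_le univ (f := ![(s : ℝ), lam ^ 2 * k])
      (g := ![l2norm (restr x S) ^ 2, l2norm (restr c T) ^ 2])
      (Fin.forall_fin_two.mpr ⟨by simp, by simp; positivity⟩)
      (Fin.forall_fin_two.mpr ⟨by simp; positivity, by simp; positivity⟩)
    simp only [Fin.sum_univ_two, Matrix.cons_val_zero, Matrix.cons_val_one] at h
    rwa [Real.sqrt_sq (l2norm_nonneg _), Real.sqrt_sq (l2norm_nonneg _)] at h
  have hQρ : Q * (ρ / Q) ≤ ρ := by
    rcases eq_or_ne Q 0 with hQ | hQ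
    · simp [hQ, hρ]
    · rw [mul_div_cancel₀ _ hQ]
  have htail : 0 ≤ tail := by
    have := l1norm_nonneg (restr x Sᶜ); have := l1norm_nonneg (restr c Tᶜ); positivity
  calc l1norm (restr x S) + lam * l1norm (restr c T)
      ≤ Q * Real.sqrt (l2norm (restr x S) ^ 2 + l2norm (restr c T) ^ 2) := by linarith
    _ ≤ Q * ((ρ / Q) * tail + τ * l2norm (A *ᵥ x + c)) :=
        mul_le_mul_of_nonneg_left (hA x c S T hS hT) (Real.sqrt_nonneg _)
    _ = Q * (ρ / Q) * tail + τ * Q * l2norm (A *ᵥ x + c) := by ring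
    _ ≤ ρ * tail + τ * Q * l2norm (A *ᵥ x + c) := by gcongr

lemma L1RNSP.l1norm_add_le_of_cone (hA : L1RNSP A s k lam ρ τ) (hρ0 : 0 ≤ ρ) (hρ1 : ρ < 1)
    {u : Fin N → ℂ} {w : Fin m → ℂ} {S : Finset (Fin N)} {T : Finset (Fin m)}
    (hS : S.card ≤ s) (hT : T.card ≤ k) {D : ℝ}
    (hcone : l1norm (restr u Sᶜ) + lam * l1norm (restr w Tᶜ) ≤
      l1norm (restr u S) + lam * l1norm (restr w T) + D) :
    l1norm u + lam * l1norm w ≤ ((1 + ρ) * D + 2 * τ * l2norm (A *ᵥ u + w)) / (1 - ρ) := by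
  rw [le_div_iff₀ (by linarith)]
  have hsplit : l1norm u + lam * l1norm w = (l1norm (restr u S) + lam * l1norm (restr w T)) +
      (l1norm (restr u Sᶜ) + lam * l1norm (restr w Tᶜ)) := by
    rw [← l1norm_restr_add_l1norm_restr_compl u S, ← l1norm_restr_add_l1norm_restr_compl w T]
    ring
  have hhead := hA u w S T hS hT
  have := mul_le_mul_of_nonneg_left hcone hρ0
  have := mul_le_mul_of_nonneg_left hcone (sub_nonneg.mpr hρ1.le)
  rw [hsplit]
  linarith

lemma L2RNSP.l2norm_add_l2norm_le (hA : L2RNSP A s k lam ρ τ) (hlam : 0 < lam) (hs : 0 < s)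
    (hsN : s ≤ N) (hk : 0 < k) (hkm : k ≤ m) (hρ : ρ ≤ 1) (hτ : 0 ≤ τ)
    (u : Fin N → ℂ) (w : Fin m → ℂ) :
    l2norm u + l2norm w ≤ 2 * (1 + etaSK s k lam ^ ((1 : ℝ) / 4)) *
      ((l1norm u + lam * l1norm w) / Real.sqrt (s + lam ^ 2 * k) +
        τ * l2norm (A *ᵥ u + w)) := by
  set Q := Real.sqrt (s + lam ^ 2 * k)
  set P := l1norm u + lam * l1norm w
  set r := l2norm (A *ᵥ u + w)
  set t := etaSK s k lam ^ ((1 : ℝ) / 4)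
  obtain ⟨S, hScard, hSord, -⟩ := exists_largest_norms u hsN
  obtain ⟨T, hTcard, hTord, -⟩ := exists_largest_norms w hkm
  set K := Real.sqrt (l2norm (restr u S) ^ 2 + l2norm (restr w T) ^ 2)
  have hsR : (0 : ℝ) < s := by exact_mod_cast hs
  have hkR : (0 : ℝ) < k := by exact_mod_cast hk
  have hμ : 0 < min (s : ℝ) (lam ^ 2 * k) := lt_min hsR (by positivity)
  have hQ : 0 < Q := Real.sqrt_pos.mpr (by positivity)
  have hη : 0 ≤ etaSK s k lam := zero_le_one.trans (one_le_etaSK hμ)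
  have ht : 0 ≤ t := Real.rpow_nonneg hη _
  have hu1 := l1norm_nonneg u
  have hw1 := l1norm_nonneg w
  have hK : K ≤ P / Q + τ * r := by
    have htail : l1norm (restr u Sᶜ) + lam * l1norm (restr w Tᶜ) ≤ P :=
      add_le_add (l1norm_restr_le u _) (mul_le_mul_of_nonneg_left (l1norm_restr_le w _) hlam.le)
    have htail0 : 0 ≤ l1norm (restr u Sᶜ) + lam * l1norm (restr w Tᶜ) := by
      have := l1norm_nonneg (restr u Sᶜ); have := l1norm_nonneg (restr w Tᶜ); positivity
    calc K ≤ ρ / Q * (l1norm (restr u Sᶜ) + lam * l1norm (restr w Tᶜ)) + τ * r :=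
          hA u w S T hScard.le hTcard.le
      _ ≤ 1 / Q * P + τ * r := by gcongr
      _ = P / Q + τ * r := by ring
  have hu : l2norm u ≤ K + t * ((K + P / Q) / 2) := by
    refine l2norm_le_of_largest_norms u (card_pos.mp (hScard ▸ hs)) hSord
      (Real.le_sqrt_of_sq_le (by nlinarith [sq_nonneg (l2norm (restr w T))])) one_pos
      (by linarith [mul_nonneg hlam.le hw1]) hQ ht ?_
    rw [rpow_one_fourth_sq hη, hScard, one_mul]
    exact sqrt_add_le_sqrt_etaSK_mul_sqrt hμ (min_le_left _ _)
  have hw : l2norm w ≤ K + t * ((K + P / Q) / 2) := by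
    refine l2norm_le_of_largest_norms w (card_pos.mp (hTcard ▸ hk)) hTord
      (Real.le_sqrt_of_sq_le (by nlinarith [sq_nonneg (l2norm (restr u S))])) hlam
      (by linarith) hQ ht ?_
    rw [rpow_one_fourth_sq hη, hTcard]
    have := sqrt_add_le_sqrt_etaSK_mul_sqrt hμ (min_le_right _ _)
    rwa [Real.sqrt_mul (sq_nonneg lam), Real.sqrt_sq hlam.le] at this
  have htK := mul_le_mul_of_nonneg_left hK ht
  have htτr : 0 ≤ t * (τ * r) := mul_nonneg ht (mul_nonneg hτ (l2norm_nonneg _))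
  linarith

lemma IsMinimizer.cone (hmin : IsMinimizer A y lam ε xh ch) (hlam : 0 ≤ lam)
    (hx : l2norm (A *ᵥ x + c - y) ≤ ε) (S : Finset (Fin N)) (T : Finset (Fin m)) :
    l1norm (restr (x - xh) Sᶜ) + lam * l1norm (restr (c - ch) Tᶜ) ≤
      l1norm (restr (x - xh) S) + lam * l1norm (restr (c - ch) T) +
        2 * (l1norm (restr x Sᶜ) + lam * l1norm (restr c Tᶜ)) := by
  have hu := l1norm_restr_compl_sub_le x xh S
  have hw := mul_le_mul_of_nonneg_left (l1norm_restr_compl_sub_le c ch T) hlam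
  linarith [hmin.2 x c hx]

lemma IsMinimizer.l2norm_residual_le (hmin : IsMinimizer A y lam ε xh ch)
    (hx : l2norm (A *ᵥ x + c - y) ≤ ε) :
    l2norm (A *ᵥ (x - xh) + (c - ch)) ≤ 2 * ε := by
  have heq : A *ᵥ (x - xh) + (c - ch) = (A *ᵥ x + c - y) - (A *ᵥ xh + ch - y) := by
    rw [Matrix.mulVec_sub]; abel
  rw [heq]
  linarith [l2norm_sub_le (A *ᵥ x + c - y) (A *ᵥ xh + ch - y), hmin.1]

lemma L2RNSP.l1norm_sub_add_div_le (hA : L2RNSP A s k lam ρ τ) (hρ0 : 0 ≤ ρ) (hρ1 : ρ < 1)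
    (hτ : 0 ≤ τ) (hlam : 0 < lam) (hs : 0 < s) (hsN : s ≤ N) (hk : 0 < k) (hkm : k ≤ m)
    (hmin : IsMinimizer A y lam ε xh ch) (hx : l2norm (A *ᵥ x + c - y) ≤ ε) :
    (l1norm (x - xh) + lam * l1norm (c - ch)) / Real.sqrt (s + lam ^ 2 * k) ≤
      (2 * (1 + ρ) * (sigma1 s x / Real.sqrt s + sigma1 k c / Real.sqrt k) + 4 * τ * ε) /
        (1 - ρ) := by
  set Q := Real.sqrt (s + lam ^ 2 * k)
  set R := sigma1 s x / Real.sqrt s + sigma1 k c / Real.sqrt k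
  obtain ⟨S, hS, -, hSmax⟩ := exists_largest_norms x hsN
  obtain ⟨T, hT, -, hTmax⟩ := exists_largest_norms c hkm
  have hσx := l1norm_restr_compl_le_sigma1 x S hSmax
  have hσc := l1norm_restr_compl_le_sigma1 c T hTmax
  have hσ : l1norm (restr x Sᶜ) + lam * l1norm (restr c Tᶜ) ≤ Q * R :=
    (add_le_add hσx (mul_le_mul_of_nonneg_left hσc hlam.le)).trans
      (add_mul_le_sqrt_add_mul hs hk hlam.le ((l1norm_nonneg _).trans hσx)
        ((l1norm_nonneg _).trans hσc))
  have hr := hmin.l2norm_residual_le hx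
  rw [div_le_iff₀ (Real.sqrt_pos.mpr (by positivity))]
  calc l1norm (x - xh) + lam * l1norm (c - ch)
      ≤ ((1 + ρ) * (2 * (l1norm (restr x Sᶜ) + lam * l1norm (restr c Tᶜ))) +
          2 * (τ * Q) * l2norm (A *ᵥ (x - xh) + (c - ch))) / (1 - ρ) :=
        (hA.l1RNSP hlam.le hρ0).l1norm_add_le_of_cone hρ0 hρ1 hS.le hT.le
          (hmin.cone hlam.le hx S T)
    _ ≤ ((1 + ρ) * (2 * (Q * R)) + 2 * (τ * Q) * (2 * ε)) / (1 - ρ) := by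
        have := sub_pos.mpr hρ1; gcongr
    _ = (2 * (1 + ρ) * R + 4 * τ * ε) / (1 - ρ) * Q := by ring

end NullSpaceProperty

/-- ℓ² recovery estimate under the ℓ²-robust NSP, with constants
depending only on ρ and τ. -/
theorem l2_recovery_of_l2RNSP (ρ τ : ℝ) (hρ0 : 0 < ρ) (hρ1 : ρ < 1) (hτ : 0 < τ) :
    ∃ C₃ C₄ : ℝ, 0 < C₃ ∧ 0 < C₄ ∧
      ∀ (N m s k : ℕ), 1 ≤ s → s ≤ N → 1 ≤ k → k ≤ m →
        ∀ lam : ℝ, 0 < lam →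
          ∀ A : Matrix (Fin m) (Fin N) ℂ, L2RNSP A s k lam ρ τ →
            ∀ (x : Fin N → ℂ) (c y : Fin m → ℂ) (ε : ℝ), 0 < ε →
              l2norm (A.mulVec x + c - y) ≤ ε →
              ∀ (xh : Fin N → ℂ) (ch : Fin m → ℂ), IsMinimizer A y lam ε xh ch →
                l2norm (x - xh) + l2norm (c - ch) ≤
                  C₃ * (1 + etaSK s k lam ^ ((1 : ℝ) / 4)) *
                      (sigma1 s x / Real.sqrt (s : ℝ) + sigma1 k c / Real.sqrt (k : ℝ)) +
                    C₄ * (1 + etaSK s k lam ^ ((1 : ℝ) / 4)) * ε := by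
  have h1ρ : 0 < 1 - ρ := sub_pos.mpr hρ1
  refine ⟨4 * (1 + ρ) / (1 - ρ), 4 * τ * (3 - ρ) / (1 - ρ), by positivity,
    div_pos (by nlinarith) h1ρ, ?_⟩
  intro N m s k hs hsN hk hkm lam hlam A hA x c y ε _ hx xh ch hmin
  have ht : 0 ≤ etaSK s k lam ^ ((1 : ℝ) / 4) := Real.rpow_nonneg (by unfold etaSK; positivity) _
  calc l2norm (x - xh) + l2norm (c - ch)
      ≤ 2 * (1 + etaSK s k lam ^ ((1 : ℝ) / 4)) *
          ((l1norm (x - xh) + lam * l1norm (c - ch)) / Real.sqrt (s + lam ^ 2 * k) +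
            τ * l2norm (A *ᵥ (x - xh) + (c - ch))) :=
        hA.l2norm_add_l2norm_le hlam hs hsN hk hkm hρ1.le hτ.le _ _
    _ ≤ 2 * (1 + etaSK s k lam ^ ((1 : ℝ) / 4)) *
          ((2 * (1 + ρ) * (sigma1 s x / Real.sqrt s + sigma1 k c / Real.sqrt k) + 4 * τ * ε) /
            (1 - ρ) + τ * (2 * ε)) := by
        gcongr ?_ * (?_ + τ * ?_)
        · exact hA.l1norm_sub_add_div_le hρ0.le hρ1 hτ.le hlam hs hsN hk hkm hmin hx
        · exact hmin.l2norm_residual_le hx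
    _ = _ := by field_simp; ring
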